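/- For every nonzero α ∈ ℂ with α ≠ −1, on the 3-dimensional complex vector space with basis {x,y,z}, the anticommutative bilinear bracket determined by [x,y] = y, [x,z] = αz, [y,z] = x, together with the skew-symmetric bilinear form ω determined by ω(x,y) = 0, ω(x,z) = 0, ω(y,z) = 1+α, satisfies the ω-Jacobi identity; this structure C_α is a nontrivial (non-Lie) ω-Lie algebra (for α = −1 the same bracket with ω = 0 satisfies the identity but is a Lie algebra). -/

import Mathlib

/-- The bracket of `C_α` on `ℂ³`: the bilinear extension of `[x,y] = y`,
`[x,z] = α z`, `[y,z] = x` on the standard basis `x = e₀, y = e₁, z = e₂`. -/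
def brC (α : ℂ) (u v : Fin 3 → ℂ) : Fin 3 → ℂ :=
  ![u 1 * v 2 - u 2 * v 1, u 0 * v 1 - u 1 * v 0, α * (u 0 * v 2 - u 2 * v 0)]

/-- The form of `C_α`: the bilinear extension of `ω(x,y) = ω(x,z) = 0`,
`ω(y,z) = 1 + α`. -/
def omC (α : ℂ) (u v : Fin 3 → ℂ) : ℂ := (1 + α) * (u 1 * v 2 - u 2 * v 1)

/-!
Everything reduces to polynomial identities in the coordinates. The only structural point is
that `ω` carries the factor `1 + α`: it vanishes exactly at `α = -1`, where the ω-Jacobi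
identity therefore degenerates to the ordinary Jacobi identity.
-/

section

variable (α : ℂ)

theorem brC_add_smul_left (a b : ℂ) (u v w : Fin 3 → ℂ) :
    brC α (a • u + b • v) w = a • brC α u w + b • brC α v w := by
  ext i; fin_cases i <;> simp [brC] <;> ring

theorem brC_add_smul_right (a b : ℂ) (u v w : Fin 3 → ℂ) :
    brC α w (a • u + b • v) = a • brC α w u + b • brC α w v := by
  ext i; fin_cases i <;> simp [brC] <;> ring

theorem omC_add_smul_left (a b : ℂ) (u v w : Fin 3 → ℂ) :
    omC α (a • u + b • v) w = a * omC α u w + b * omC α v w := by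
  simp only [omC, Pi.add_apply, Pi.smul_apply, smul_eq_mul]; ring

theorem omC_add_smul_right (a b : ℂ) (u v w : Fin 3 → ℂ) :
    omC α w (a • u + b • v) = a * omC α w u + b * omC α w v := by
  simp only [omC, Pi.add_apply, Pi.smul_apply, smul_eq_mul]; ring

theorem brC_anticomm (u v : Fin 3 → ℂ) : brC α u v = -brC α v u := by
  ext i; fin_cases i <;> simp [brC] <;> ring

theorem omC_anticomm (u v : Fin 3 → ℂ) : omC α u v = -omC α v u := by
  simp only [omC]; ring

theorem brC_omega_jacobi (u v w : Fin 3 → ℂ) :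
    brC α (brC α u v) w + brC α (brC α v w) u + brC α (brC α w u) v
      = omC α u v • w + omC α v w • u + omC α w u • v := by
  ext i; fin_cases i <;> simp [brC, omC] <;> ring

theorem omC_neg_one : omC (-1) = 0 := by
  ext u v; simp [omC]

theorem omC_eq_zero_iff : (∀ u v : Fin 3 → ℂ, omC α u v = 0) ↔ α = -1 := by
  constructor
  · intro h
    have hyz : omC α ![0, 1, 0] ![0, 0, 1] = 0 := h _ _
    simp [omC] at hyz
    linear_combination hyz
  · rintro rfl u v
    rw [omC_neg_one]; rfl

theorem brC_jacobi_neg_one (u v w : Fin 3 → ℂ) :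
    brC (-1) (brC (-1) u v) w + brC (-1) (brC (-1) v w) u
      + brC (-1) (brC (-1) w u) v = 0 := by
  simp [brC_omega_jacobi, omC_neg_one]

end

theorem C_alpha_is_nontrivial_omega_lie_general (α : ℂ) (hα' : α ≠ -1) :
    (∀ (a b : ℂ) (u v w : Fin 3 → ℂ),
        brC α (a • u + b • v) w = a • brC α u w + b • brC α v w) ∧
    (∀ (a b : ℂ) (u v w : Fin 3 → ℂ),
        brC α w (a • u + b • v) = a • brC α w u + b • brC α w v) ∧
    (∀ (a b : ℂ) (u v w : Fin 3 → ℂ),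
        omC α (a • u + b • v) w = a * omC α u w + b * omC α v w) ∧
    (∀ (a b : ℂ) (u v w : Fin 3 → ℂ),
        omC α w (a • u + b • v) = a * omC α w u + b * omC α w v) ∧
    brC α ![1,0,0] ![0,1,0] = ![0,1,0] ∧
    brC α ![1,0,0] ![0,0,1] = α • ![0,0,1] ∧
    brC α ![0,1,0] ![0,0,1] = ![1,0,0] ∧
    omC α ![1,0,0] ![0,1,0] = 0 ∧
    omC α ![1,0,0] ![0,0,1] = 0 ∧
    omC α ![0,1,0] ![0,0,1] = 1 + α ∧
    (∀ u v : Fin 3 → ℂ, brC α u v = - brC α v u) ∧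
    (∀ u v : Fin 3 → ℂ, omC α u v = - omC α v u) ∧
    (∀ u v w : Fin 3 → ℂ,
        brC α (brC α u v) w + brC α (brC α v w) u + brC α (brC α w u) v
          = omC α u v • w + omC α v w • u + omC α w u • v) ∧
    ¬ (∀ u v : Fin 3 → ℂ, omC α u v = 0) ∧
    (∀ u v w : Fin 3 → ℂ,
        brC (-1) (brC (-1) u v) w + brC (-1) (brC (-1) v w) u
          + brC (-1) (brC (-1) w u) v = 0) := by
  refine ⟨brC_add_smul_left α, brC_add_smul_right α, omC_add_smul_left α,
    omC_add_smul_right α, ?_, ?_, ?_, ?_, ?_, ?_, brC_anticomm α, omC_anticomm α,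
    brC_omega_jacobi α, (omC_eq_zero_iff α).not.mpr hα', brC_jacobi_neg_one⟩
  all_goals first
    | ext i; fin_cases i <;> simp [brC]
    | simp [omC]

/-- For every `α ∈ ℂ` with `α ≠ 0` and `α ≠ -1`, on `ℂ³` with basis
`x = e₀, y = e₁, z = e₂`, the anticommutative bilinear bracket determined by
`[x,y] = y`, `[x,z] = α z`, `[y,z] = x` and the skew-symmetric bilinear form
determined by `ω(x,y) = ω(x,z) = 0`, `ω(y,z) = 1 + α` satisfy the ω-Jacobi identity,
and `ω` is not identically zero: `C_α` is a nontrivial (non-Lie) ω-Lie algebra.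
(For `α = -1` the same bracket with `ω = 0` satisfies the identity, i.e. it is a
Lie algebra; this is the final conjunct.) -/
theorem C_alpha_is_nontrivial_omega_lie (α : ℂ) (hα : α ≠ 0) (hα' : α ≠ -1) :
    (∀ (a b : ℂ) (u v w : Fin 3 → ℂ),
        brC α (a • u + b • v) w = a • brC α u w + b • brC α v w) ∧
    (∀ (a b : ℂ) (u v w : Fin 3 → ℂ),
        brC α w (a • u + b • v) = a • brC α w u + b • brC α w v) ∧
    (∀ (a b : ℂ) (u v w : Fin 3 → ℂ),
        omC α (a • u + b • v) w = a * omC α u w + b * omC α v w) ∧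
    (∀ (a b : ℂ) (u v w : Fin 3 → ℂ),
        omC α w (a • u + b • v) = a * omC α w u + b * omC α w v) ∧
    brC α ![1,0,0] ![0,1,0] = ![0,1,0] ∧
    brC α ![1,0,0] ![0,0,1] = α • ![0,0,1] ∧
    brC α ![0,1,0] ![0,0,1] = ![1,0,0] ∧
    omC α ![1,0,0] ![0,1,0] = 0 ∧
    omC α ![1,0,0] ![0,0,1] = 0 ∧
    omC α ![0,1,0] ![0,0,1] = 1 + α ∧
    (∀ u v : Fin 3 → ℂ, brC α u v = - brC α v u) ∧
    (∀ u v : Fin 3 → ℂ, omC α u v = - omC α v u) ∧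
    (∀ u v w : Fin 3 → ℂ,
        brC α (brC α u v) w + brC α (brC α v w) u + brC α (brC α w u) v
          = omC α u v • w + omC α v w • u + omC α w u • v) ∧
    ¬ (∀ u v : Fin 3 → ℂ, omC α u v = 0) ∧
    (∀ u v w : Fin 3 → ℂ,
        brC (-1) (brC (-1) u v) w + brC (-1) (brC (-1) v w) u
          + brC (-1) (brC (-1) w u) v = 0) :=
  C_alpha_is_nontrivial_omega_lie_general α hα'
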